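/- Enumerating the Calkin-Wilf tree breadth-first as a sequence q₁ = 1/1, q₂ = 1/2, q₃ = 2/1, …, the parity of q_N depends only on N mod 3: q_N is odd if N ≡ 1 (mod 3), has parity 'none' if N ≡ 2 (mod 3), and is even if N ≡ 0 (mod 3). Consequently each of the three parity classes has natural density 1/3 in this enumeration. -/

import Mathlib

/-!
Reduce numerator and denominator mod 2. The children `m/(m+n)` and `(m+n)/n` of `m/n` have
classes `(m, m+n)` and `(m+n, n)`, and on residues mod 3 the indices `N ↦ 2N, 2N+1` act as
`r ↦ 2r, 2r+1`. The assignment `0 ↦ even, 1 ↦ odd, 2 ↦ none` intertwines the two actions, so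
it propagates down the tree from `cw 0 = 0`, which is even. Each parity class is then a residue
class mod 3, whose density is `1/3` because it meets every block of 3 consecutive integers once.
-/

/-- The Calkin-Wilf sequence: `cw 1 = 1`, and if `cw N = m/n` (reduced) then
`cw (2N) = m/(m+n) = cw N / (cw N + 1)` and `cw (2N+1) = (m+n)/n = cw N + 1`. -/
def cw : ℕ → ℚ
  | 0 => 0
  | 1 => 1
  | n + 2 =>
    let q := cw ((n + 2) / 2)
    if (n + 2) % 2 = 0 then q / (q + 1) else q + 1
decreasing_by all_goals simp_wf; omega

open Finset Filter Topology

namespace Rat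

theorem num_den_of_eq_div {q : ℚ} {a b : ℤ} (hb : 0 < b) (hab : IsCoprime a b)
    (h : q = a / b) : q.num = a ∧ (q.den : ℤ) = b := by
  have hab' := Int.isCoprime_iff_nat_coprime.mp hab
  subst h
  exact ⟨num_div_eq_of_coprime hb hab', den_div_eq_of_coprime hb hab'⟩

theorem num_den_add_one (q : ℚ) : (q + 1).num = q.num + q.den ∧ ((q + 1).den : ℤ) = q.den := by
  refine num_den_of_eq_div (mod_cast q.den_pos) ?_ ?_
  · simpa using q.isCoprime_num_den.add_mul_left_left 1
  · push_cast
    rw [add_div, div_self (mod_cast q.den_ne_zero), num_div_den]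

theorem num_den_div_add_one {q : ℚ} (hq : -1 < q) :
    (q / (q + 1)).num = q.num ∧ ((q / (q + 1)).den : ℤ) = q.num + q.den := by
  have hden : (0 : ℚ) < q.den := mod_cast q.den_pos
  have hpos : 0 < q.num + (q.den : ℤ) := by
    have : (-1 : ℚ) * q.den < q.num := by
      rw [← q.mul_den_eq_num]; exact mul_lt_mul_of_pos_right hq hden
    exact_mod_cast (by linarith : (0 : ℚ) < q.num + q.den)
  refine num_den_of_eq_div hpos ?_ ?_
  · simpa [add_comm] using q.isCoprime_num_den.add_mul_left_right 1
  · have : q + 1 ≠ 0 := by linarith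
    push_cast
    rw [div_eq_div_iff this (by exact_mod_cast hpos.ne'), ← q.mul_den_eq_num]
    ring

def parityClass (q : ℚ) : ZMod 2 × ZMod 2 := (q.num, q.den)

theorem parityClass_add_one (q : ℚ) :
    (q + 1).parityClass = (q.parityClass.1 + q.parityClass.2, q.parityClass.2) := by
  obtain ⟨hnum, hden⟩ := q.num_den_add_one
  simp only [parityClass, hnum, Prod.mk.injEq]
  constructor
  · push_cast; rfl
  · exact_mod_cast congrArg (Int.cast : ℤ → ZMod 2) hden

theorem parityClass_div_add_one {q : ℚ} (hq : -1 < q) :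
    (q / (q + 1)).parityClass = (q.parityClass.1, q.parityClass.1 + q.parityClass.2) := by
  obtain ⟨hnum, hden⟩ := num_den_div_add_one hq
  simp only [parityClass, hnum, Prod.mk.injEq, true_and]
  exact_mod_cast congrArg (Int.cast : ℤ → ZMod 2) hden

end Rat

theorem tendsto_div_of_abs_sub_mul_le {f : ℕ → ℝ} {c C : ℝ} (h : ∀ n : ℕ, |f n - c * n| ≤ C) :
    Tendsto (fun n : ℕ => f n / n) atTop (𝓝 c) := by
  have herr : Tendsto (fun n : ℕ => (f n - c * n) / n) atTop (𝓝 0) := by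
    refine squeeze_zero_norm (fun n => ?_) (tendsto_const_div_atTop_nhds_zero_nat C)
    rw [Real.norm_eq_abs, abs_div, Nat.abs_cast]
    exact div_le_div_of_nonneg_right (h n) n.cast_nonneg
  have hc := herr.const_add c
  rw [add_zero] at hc
  refine hc.congr' ?_
  filter_upwards [eventually_ne_atTop 0] with n hn
  field_simp
  ring

theorem abs_card_filter_modEq_sub_div_le (m v n : ℕ) (hm : 0 < m) :
    |(#{k ∈ Icc 1 n | k ≡ v [MOD m]} : ℝ) - n / m| ≤ 1 := by
  have hIcc : Icc 1 n = Ioc 0 n := by ext; simp; omega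
  have hcard := Nat.Ioc_filter_modEq_card 0 n hm v
  rw [← hIcc] at hcard
  set c := #{k ∈ Icc 1 n | k ≡ v [MOD m]}
  set x : ℚ := ((n : ℚ) - v) / m
  set y : ℚ := ((0 : ℕ) - (v : ℚ)) / m
  have hxy : x - y = n / m := by simp only [x, y]; ring
  have hfloor : (c : ℚ) = max ((⌊x⌋ : ℚ) - ⌊y⌋) 0 := by exact_mod_cast hcard
  have hq : |(c : ℚ) - n / m| ≤ 1 := by
    rw [abs_le, hfloor, ← hxy]
    have := Int.floor_le x; have := Int.lt_floor_add_one x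
    have := Int.floor_le y; have := Int.lt_floor_add_one y
    constructor
    · linarith [le_max_left ((⌊x⌋ : ℚ) - ⌊y⌋) 0]
    · have : (0 : ℚ) ≤ x - y := by rw [hxy]; positivity
      exact sub_le_iff_le_add.mpr (max_le (by linarith) (by linarith))
  have hr := (Rat.cast_le (K := ℝ)).mpr hq
  push_cast at hr
  exact hr

theorem tendsto_card_filter_modEq_div (m v : ℕ) (hm : 0 < m) :
    Tendsto (fun n : ℕ => (#{k ∈ Icc 1 n | k ≡ v [MOD m]} : ℝ) / n) atTop (𝓝 (1 / m)) := by
  refine tendsto_div_of_abs_sub_mul_le (C := 1) fun n => ?_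
  rw [one_div_mul_eq_div]
  exact abs_card_filter_modEq_sub_div_le m v n hm

def cwParityPattern : ZMod 3 → ZMod 2 × ZMod 2 := ![(0, 1), (1, 1), (1, 0)]

theorem cwParityPattern_two_mul (r : ZMod 3) :
    cwParityPattern (2 * r) =
      ((cwParityPattern r).1, (cwParityPattern r).1 + (cwParityPattern r).2) := by
  revert r; decide

theorem cwParityPattern_two_mul_add_one (r : ZMod 3) :
    cwParityPattern (2 * r + 1) =
      ((cwParityPattern r).1 + (cwParityPattern r).2, (cwParityPattern r).2) := by
  revert r; decide

theorem cw_two_mul (n : ℕ) : cw (2 * n) = cw n / (cw n + 1) := by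
  cases n with
  | zero => simp [cw]
  | succ n =>
    rw [show 2 * (n + 1) = 2 * n + 2 by ring, cw]
    simp [show (2 * n + 2) / 2 = n + 1 by omega]

theorem cw_two_mul_add_one (n : ℕ) : cw (2 * n + 1) = cw n + 1 := by
  cases n with
  | zero => simp [cw]
  | succ n =>
    rw [show 2 * (n + 1) + 1 = 2 * n + 1 + 2 by ring, cw]
    simp [show (2 * n + 1 + 2) / 2 = n + 1 by omega, show (2 * n + 1 + 2) % 2 = 1 by omega]

theorem cw_nonneg (n : ℕ) : 0 ≤ cw n := by
  induction n using Nat.evenOddRec with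
  | h0 => simp [cw]
  | h_even n ih => rw [cw_two_mul]; positivity
  | h_odd n ih => rw [cw_two_mul_add_one]; positivity

theorem parityClass_cw (n : ℕ) : (cw n).parityClass = cwParityPattern n := by
  induction n using Nat.evenOddRec with
  | h0 => rw [cw, Nat.cast_zero]; decide
  | h_even n ih =>
    rw [cw_two_mul, Rat.parityClass_div_add_one (by linarith [cw_nonneg n]), ih, Nat.cast_mul,
      Nat.cast_ofNat, cwParityPattern_two_mul]
  | h_odd n ih =>
    rw [cw_two_mul_add_one, Rat.parityClass_add_one, ih]
    push_cast
    rw [cwParityPattern_two_mul_add_one]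

theorem cw_parity_iff_mod_three (k : ℕ) :
    (Odd (cw k).num ∧ Odd ((cw k).den : ℤ) ↔ k % 3 = 1) ∧
    (Odd (cw k).num ∧ Even ((cw k).den : ℤ) ↔ k % 3 = 2) ∧
    (Even (cw k).num ∧ Odd ((cw k).den : ℤ) ↔ k % 3 = 0) := by
  have h := parityClass_cw k
  simp only [Rat.parityClass, Prod.ext_iff] at h
  simp only [← ZMod.intCast_eq_one_iff_odd, ← ZMod.intCast_eq_zero_iff_even, Int.cast_natCast,
    h.1, h.2, ← ZMod.natCast_mod k 3]
  have hk : k % 3 < 3 := Nat.mod_lt k three_pos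
  generalize k % 3 = r at hk ⊢
  interval_cases r <;> decide

/-- In the breadth-first Calkin-Wilf enumeration of the positive rationals, the
parity of the N-th term depends only on N mod 3: odd if N ≡ 1, none if N ≡ 2,
even if N ≡ 0 (mod 3); consequently each of the three parity classes has
natural density 1/3 in this enumeration. -/
theorem calkin_wilf_parity_pattern_and_density :
    (∀ N : ℕ, 1 ≤ N →
      (N % 3 = 1 → Odd (cw N).num ∧ Odd ((cw N).den : ℤ)) ∧
      (N % 3 = 2 → Odd (cw N).num ∧ Even ((cw N).den : ℤ)) ∧
      (N % 3 = 0 → Even (cw N).num ∧ Odd ((cw N).den : ℤ))) ∧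
    Filter.Tendsto (fun N : ℕ =>
        (((Finset.Icc 1 N).filter (fun k => Odd (cw k).num ∧ Odd ((cw k).den : ℤ))).card : ℝ) / N)
      Filter.atTop (nhds (1 / 3)) ∧
    Filter.Tendsto (fun N : ℕ =>
        (((Finset.Icc 1 N).filter (fun k => Odd (cw k).num ∧ Even ((cw k).den : ℤ))).card : ℝ) / N)
      Filter.atTop (nhds (1 / 3)) ∧
    Filter.Tendsto (fun N : ℕ =>
        (((Finset.Icc 1 N).filter (fun k => Even (cw k).num ∧ Odd ((cw k).den : ℤ))).card : ℝ) / N)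
      Filter.atTop (nhds (1 / 3)) := by
  have hdensity (r : ℕ) : Tendsto (fun n : ℕ => (#{k ∈ Icc 1 n | k % 3 = r % 3} : ℝ) / n)
      atTop (𝓝 (1 / 3)) := by
    convert tendsto_card_filter_modEq_div 3 r three_pos using 1
    · rfl
    · norm_num
  refine ⟨fun N _ => ⟨(cw_parity_iff_mod_three N).1.2, (cw_parity_iff_mod_three N).2.1.2, (cw_parity_iff_mod_three N).2.2.2⟩,
    ?_, ?_, ?_⟩
  · simpa only [(cw_parity_iff_mod_three _).1] using hdensity 1
  · simpa only [(cw_parity_iff_mod_three _).2.1] using hdensity 2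
  · simpa only [(cw_parity_iff_mod_three _).2.2] using hdensity 0
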